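/- arXiv:1612.03492 — 4 statements merged into one kernel-verified Lean document; each statement's English description precedes it below -/
import Mathlib

section
/- Let E be a real normed vector space and let γ : S¹ → E be an L-Lipschitz loop with γ(1) = 0 (viewing S¹ ⊂ ℂ). Then the map f : D² → E defined by f(r·e^{iθ}) = r·γ(e^{iθ}) (and f(0)=0) is C·L-Lipschitz for some universal constant C independent of E, γ and L, and f restricted to S¹ equals γ. -/
/-- Coning off a Lipschitz loop in a normed space: there is a universal constant `C`
such that for any real normed space `E` and any `L`-Lipschitz loop `γ : S¹ → E` with
`γ 1 = 0`, the cone map `f(z) = ‖z‖ • γ(z/‖z‖)` is `C·L`-Lipschitz on the unit disk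
and restricts to `γ` on the circle. -/
theorem coning_off_lipschitz :
    ∃ C : ℝ, 0 < C ∧
      ∀ (E : Type) [NormedAddCommGroup E] [NormedSpace ℝ E]
        (γ : ℂ → E) (L : ℝ), 0 ≤ L →
        (∀ x ∈ Metric.sphere (0:ℂ) 1, ∀ y ∈ Metric.sphere (0:ℂ) 1,
          ‖γ x - γ y‖ ≤ L * ‖x - y‖) →
        γ 1 = 0 →
        (∀ x ∈ Metric.sphere (0:ℂ) 1, ‖x‖ • γ ((‖x‖)⁻¹ • x) = γ x) ∧
        (∀ x ∈ Metric.closedBall (0:ℂ) 1, ∀ y ∈ Metric.closedBall (0:ℂ) 1,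
          ‖(‖x‖ • γ ((‖x‖)⁻¹ • x)) - (‖y‖ • γ ((‖y‖)⁻¹ • y))‖ ≤ C * L * ‖x - y‖) := by
  refine ⟨4, by norm_num, ?_⟩
  intro E _ _ γ L hL hlip h1
  have hsph : ∀ x : ℂ, x ≠ 0 → (‖x‖)⁻¹ • x ∈ Metric.sphere (0:ℂ) 1 := by
    intro x hx
    have hx' : ‖x‖ ≠ 0 := norm_ne_zero_iff.mpr hx
    simp only [Metric.mem_sphere, dist_zero_right, norm_smul, norm_inv, norm_norm]
    exact inv_mul_cancel₀ hx'
  have hbound : ∀ z ∈ Metric.sphere (0:ℂ) 1, ‖γ z‖ ≤ 2 * L := by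
    intro z hz
    have h1s : (1:ℂ) ∈ Metric.sphere (0:ℂ) 1 := by simp
    have h := hlip z hz 1 h1s
    rw [h1, sub_zero] at h
    have hzn : ‖z‖ = 1 := by simpa using hz
    have hz1 : ‖z - 1‖ ≤ 2 := by
      calc ‖z - 1‖ ≤ ‖z‖ + ‖(1:ℂ)‖ := norm_sub_le _ _
        _ = 2 := by rw [hzn]; norm_num
    calc ‖γ z‖ ≤ L * ‖z - 1‖ := h
      _ ≤ L * 2 := by nlinarith
      _ = 2 * L := by ring
  constructor
  · intro x hx
    have hxn : ‖x‖ = 1 := by simpa using hx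
    simp [hxn]
  · intro x _ y _
    rcases eq_or_ne x 0 with rfl | hx0
    · rcases eq_or_ne y 0 with rfl | hy0
      · simp
      · have hb := hbound _ (hsph y hy0)
        have : ‖(0:E) - ‖y‖ • γ ((‖y‖)⁻¹ • y)‖ = ‖y‖ * ‖γ ((‖y‖)⁻¹ • y)‖ := by
          rw [zero_sub, norm_neg, norm_smul, Real.norm_eq_abs, abs_of_nonneg (norm_nonneg _)]
        rw [norm_zero, zero_smul, this]
        have h0y : ‖(0:ℂ) - y‖ = ‖y‖ := by rw [zero_sub, norm_neg]
        rw [h0y]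
        nlinarith [norm_nonneg y, norm_nonneg (γ ((‖y‖)⁻¹ • y))]
    · rcases eq_or_ne y 0 with rfl | hy0
      · have hb := hbound _ (hsph x hx0)
        have : ‖‖x‖ • γ ((‖x‖)⁻¹ • x) - (0:E)‖ = ‖x‖ * ‖γ ((‖x‖)⁻¹ • x)‖ := by
          rw [sub_zero, norm_smul, Real.norm_eq_abs, abs_of_nonneg (norm_nonneg _)]
        rw [norm_zero, zero_smul, this, sub_zero]
        nlinarith [norm_nonneg x, norm_nonneg (γ ((‖x‖)⁻¹ • x))]
      · set xh := (‖x‖)⁻¹ • x with hxh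
        set yh := (‖y‖)⁻¹ • y with hyh
        have hxn : ‖x‖ ≠ 0 := norm_ne_zero_iff.mpr hx0
        have hyn : ‖y‖ ≠ 0 := norm_ne_zero_iff.mpr hy0
        have hynpos : 0 < ‖y‖ := norm_pos_iff.mpr hy0
        -- Term 1: angular
        have hlip' := hlip xh (hsph x hx0) yh (hsph y hy0)
        have hxsm : ‖x‖ • xh = x := by
          rw [hxh, smul_smul, mul_inv_cancel₀ hxn, one_smul]
        have hysm : ‖x‖ • yh = (‖x‖ * (‖y‖)⁻¹) • y := by
          rw [hyh, smul_smul]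
        have hkey : ‖x - (‖x‖ * (‖y‖)⁻¹) • y‖ ≤ 2 * ‖x - y‖ := by
          have h2 : ‖y - (‖x‖ * (‖y‖)⁻¹) • y‖ = |‖y‖ - ‖x‖| := by
            have : y - (‖x‖ * (‖y‖)⁻¹) • y = (1 - ‖x‖ * (‖y‖)⁻¹) • y := by
              rw [sub_smul, one_smul]
            rw [this, norm_smul, Real.norm_eq_abs]
            have hyn' : ‖y‖ ≠ 0 := hyn
            rw [show (1 - ‖x‖ * (‖y‖)⁻¹) = (‖y‖ - ‖x‖) / ‖y‖ by rw [sub_div, div_self hyn', ← div_eq_mul_inv]]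
            rw [abs_div, abs_of_pos hynpos, div_mul_cancel₀ _ hyn]
          calc ‖x - (‖x‖ * (‖y‖)⁻¹) • y‖
              ≤ ‖x - y‖ + ‖y - (‖x‖ * (‖y‖)⁻¹) • y‖ := by
                have := norm_sub_le_norm_sub_add_norm_sub x y ((‖x‖ * (‖y‖)⁻¹) • y)
                linarith [norm_add_le (x - y) (y - (‖x‖ * (‖y‖)⁻¹) • y),
                  norm_sub_le (x - y) (y - (‖x‖ * (‖y‖)⁻¹) • y)]
            _ = ‖x - y‖ + |‖y‖ - ‖x‖| := by rw [h2]
            _ ≤ ‖x - y‖ + ‖y - x‖ := by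
                gcongr
                exact abs_norm_sub_norm_le y x
            _ = 2 * ‖x - y‖ := by rw [norm_sub_rev y x]; ring
        have term1 : ‖x‖ * ‖γ xh - γ yh‖ ≤ 2 * L * ‖x - y‖ := by
          have hxys : ‖x‖ * ‖xh - yh‖ = ‖x - (‖x‖ * (‖y‖)⁻¹) • y‖ := by
            rw [show ‖x‖ * ‖xh - yh‖ = ‖‖x‖ • (xh - yh)‖ by
              rw [norm_smul, Real.norm_eq_abs, abs_of_nonneg (norm_nonneg _)]]
            rw [smul_sub, hxsm, hysm]
          calc ‖x‖ * ‖γ xh - γ yh‖ ≤ ‖x‖ * (L * ‖xh - yh‖) := by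
                exact mul_le_mul_of_nonneg_left hlip' (norm_nonneg _)
            _ = L * (‖x‖ * ‖xh - yh‖) := by ring
            _ = L * ‖x - (‖x‖ * (‖y‖)⁻¹) • y‖ := by rw [hxys]
            _ ≤ L * (2 * ‖x - y‖) := by
                exact mul_le_mul_of_nonneg_left hkey hL
            _ = 2 * L * ‖x - y‖ := by ring
        -- Term 2: radial
        have hgb := hbound yh (hsph y hy0)
        have term2 : |‖x‖ - ‖y‖| * ‖γ yh‖ ≤ 2 * L * ‖x - y‖ := by
          have h3 : |‖x‖ - ‖y‖| ≤ ‖x - y‖ := abs_norm_sub_norm_le x y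
          nlinarith [abs_nonneg (‖x‖ - ‖y‖), norm_nonneg (γ yh), norm_nonneg (x - y)]
        calc ‖‖x‖ • γ xh - ‖y‖ • γ yh‖
            ≤ ‖‖x‖ • γ xh - ‖x‖ • γ yh‖ + ‖‖x‖ • γ yh - ‖y‖ • γ yh‖ := by
              have := norm_sub_le_norm_sub_add_norm_sub (‖x‖ • γ xh) (‖x‖ • γ yh) (‖y‖ • γ yh)
              calc ‖‖x‖ • γ xh - ‖y‖ • γ yh‖
                  = ‖(‖x‖ • γ xh - ‖x‖ • γ yh) + (‖x‖ • γ yh - ‖y‖ • γ yh)‖ := by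
                    rw [sub_add_sub_cancel]
                _ ≤ _ := norm_add_le _ _
          _ = ‖x‖ * ‖γ xh - γ yh‖ + |‖x‖ - ‖y‖| * ‖γ yh‖ := by
              rw [← smul_sub, ← sub_smul, norm_smul, norm_smul, Real.norm_eq_abs,
                Real.norm_eq_abs, abs_of_nonneg (norm_nonneg x)]
          _ ≤ 2 * L * ‖x - y‖ + 2 * L * ‖x - y‖ := add_le_add term1 term2
          _ = 4 * L * ‖x - y‖ := by ring
end

section
/- Let G be a group, φ : G → G a group homomorphism, and S ⊆ G a subset containing the identity such that φ(S·S) ⊆ S. Then for all natural numbers j ≥ 1 and ℓ with ℓ ≥ ⌈log₂ j⌉, we have φ^ℓ(S^j) ⊆ S, where S^j denotes the set of products of j elements of S and φ^ℓ the ℓ-fold composite of φ. -/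
open Pointwise

private lemma key_step {G : Type*} [Group G] (φ : G →* G) (S : Set G)
    (hone : (1:G) ∈ S) (hφ : φ '' (S * S) ⊆ S) :
    ∀ j : ℕ, φ '' (S ^ j) ⊆ S ^ ((j + 1) / 2) := by
  have hS : φ '' S ⊆ S := by
    rintro x ⟨s, hs, hsx⟩
    exact hφ ⟨s, ⟨s, hs, 1, hone, by simp⟩, hsx⟩
  intro j
  induction j using Nat.strong_induction_on with
  | _ j ih =>
    match j with
    | 0 => simp
    | 1 => simpa using hS
    | (k + 2) =>
      have h2 : S ^ (k + 2) = S * S * S ^ k := by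
        rw [pow_succ', pow_succ', ← mul_assoc]
      rw [h2, Set.image_mul]
      calc φ '' (S * S) * φ '' (S ^ k) ⊆ S * S ^ ((k+1)/2) :=
            Set.mul_subset_mul hφ (ih k (by omega))
        _ ⊆ S ^ ((k + 2 + 1) / 2) := by
            rw [show (k + 2 + 1) / 2 = (k+1)/2 + 1 by omega, pow_succ']

/-- If `φ : G → G` is a group homomorphism, `1 ∈ S` and `φ(S·S) ⊆ S`, then for all
`j ≥ 1` and `ℓ ≥ ⌈log₂ j⌉` we have `φ^ℓ(S^j) ⊆ S`. -/
theorem iterate_hom_pow_subset {G : Type*} [Group G] (φ : G →* G) (S : Set G)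
    (hone : (1:G) ∈ S) (hφ : φ '' (S * S) ⊆ S) :
    ∀ j ℓ : ℕ, 1 ≤ j → Nat.clog 2 j ≤ ℓ → (⇑φ)^[ℓ] '' (S ^ j) ⊆ S := by
  intro j ℓ
  induction ℓ generalizing j with
  | zero =>
    intro hj hc
    have : j = 1 := by
      by_contra h
      have : 1 < j := by omega
      have := Nat.clog_pos (b := 2) (by norm_num) this
      omega
    simp [this]
  | succ ℓ ih =>
    intro hj hc
    rw [Function.iterate_succ, Set.image_comp]
    refine subset_trans (Set.image_mono (key_step φ S hone hφ j)) (ih _ (by omega) ?_)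
    rcases eq_or_lt_of_le hj with h1 | h2
    · simp [← h1]
    · have h3 := Nat.clog_of_two_le (b := 2) (by norm_num) h2
      have h4 : (j + 2 - 1) / 2 = (j + 1) / 2 := by omega
      rw [h4] at h3
      omega
end

section
/- Let U be a group, A an abelian group acting on U by automorphisms, and suppose a ∈ A admits a vacuum subset Ω (a compact subset of U, where U is a topological group, such that for every compact K ⊆ U there exists n > 0 with aⁿ·K·a⁻ⁿ ⊆ Ω). If U is compactly generated, then there exist b ∈ A (a power of a) and a compact generating set S of U containing the identity such that b·(S·S)·b⁻¹ ⊆ S. -/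
open Pointwise

/-! Adding the vacuum set `Ω` to a compact generating set `S₀` keeps it compact and generating,
and the vacuum property pushes the compact set `S * S` into `Ω ⊆ S` under a power of `a`. -/

theorem exists_pow_image_mul_self_subset {U A : Type*} [Group U] [TopologicalSpace U]
    [ContinuousMul U] [Monoid A] (φ : A →* MulAut U) (a : A) {Ω S : Set U}
    (hvac : ∀ K : Set U, IsCompact K → ∃ n : ℕ, 0 < n ∧ φ (a ^ n) '' K ⊆ Ω)
    (hS : IsCompact S) (hΩS : Ω ⊆ S) :
    ∃ n : ℕ, 0 < n ∧ φ (a ^ n) '' (S * S) ⊆ S := by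
  obtain ⟨n, hn, hsub⟩ := hvac (S * S) (hS.mul hS)
  exact ⟨n, hn, hsub.trans hΩS⟩

theorem tame_contracting_generating_set_general {U A : Type*} [Group U] [TopologicalSpace U]
    [IsTopologicalGroup U] [CommGroup A]
    (φ : A →* MulAut U)
    (a : A) (Ω : Set U) (hΩ : IsCompact Ω)
    (hvac : ∀ K : Set U, IsCompact K → ∃ n : ℕ, 0 < n ∧ φ (a ^ n) '' K ⊆ Ω)
    (S₀ : Set U) (hS₀ : IsCompact S₀) (hS₀one : (1:U) ∈ S₀)
    (hgen : Subgroup.closure S₀ = ⊤) :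
    ∃ m : ℕ, 0 < m ∧ ∃ S : Set U, IsCompact S ∧ (1:U) ∈ S ∧
      Subgroup.closure S = ⊤ ∧ φ (a ^ m) '' (S * S) ⊆ S := by
  have hS : IsCompact (S₀ ∪ Ω) := hS₀.union hΩ
  have hgenS : Subgroup.closure (S₀ ∪ Ω) = ⊤ :=
    top_unique (hgen ▸ Subgroup.closure_mono Set.subset_union_left)
  obtain ⟨m, hm, hcontract⟩ :=
    exists_pow_image_mul_self_subset φ a hvac hS Set.subset_union_right
  exact ⟨m, hm, S₀ ∪ Ω, hS, Or.inl hS₀one, hgenS, hcontract⟩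

/-- If `a ∈ A` acts on the compactly generated topological group `U` with a vacuum
subset `Ω`, then some power `b = aᵐ` of `a` and some compact generating set `S ∋ 1`
of `U` satisfy `b·(S·S)·b⁻¹ ⊆ S`. -/
theorem tame_contracting_generating_set {U A : Type*} [Group U] [TopologicalSpace U]
    [IsTopologicalGroup U] [BaireSpace U] [CommGroup A]
    (φ : A →* MulAut U) (hcont : ∀ b : A, Continuous (φ b))
    (a : A) (Ω : Set U) (hΩ : IsCompact Ω)
    (hvac : ∀ K : Set U, IsCompact K → ∃ n : ℕ, 0 < n ∧ φ (a ^ n) '' K ⊆ Ω)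
    (S₀ : Set U) (hS₀ : IsCompact S₀) (hS₀symm : S₀⁻¹ = S₀) (hS₀one : (1:U) ∈ S₀)
    (hgen : Subgroup.closure S₀ = ⊤) :
    ∃ m : ℕ, 0 < m ∧ ∃ S : Set U, IsCompact S ∧ (1:U) ∈ S ∧
      Subgroup.closure S = ⊤ ∧ φ (a ^ m) '' (S * S) ⊆ S :=
  tame_contracting_generating_set_general φ a Ω hΩ hvac S₀ hS₀ hS₀one hgen
end

section
/- Let X be a complete metric space such that for some D > 0 and C ≥ 1: every L-Lipschitz loop γ : S¹ → X with L < D admits a C·L-Lipschitz extension f : D² → X with f|_{S¹} = γ. Suppose also any two points of X at distance less than D are joined by a geodesic. Then every continuous loop γ : S¹ → X which is Lipschitz and null-homotopic admits a Lipschitz extension f : D² → X with f|_{S¹} = γ; in particular Span(γ) := inf{Lip(f) : f : D² → X Lipschitz, f|_{S¹} = γ} is finite. -/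
/-!
Map the round disk bi-Lipschitz onto the square `[0, n]²` (a radial rescaling between the
Euclidean and the sup norm) and cut the square into `n²` unit cells. Label every grid vertex
by the value of the continuous filling `g` there: for `n` large, uniform continuity of `g` makes
adjacent labels `ε`-close, and the transported loop is `ε`-Lipschitz. Joining adjacent labels by
geodesics, and keeping the loop itself on the outer boundary, gives a map on the grid lines
which is `3ε`-Lipschitz on the boundary of every cell. These small loops have Lipschitz fillings
by hypothesis; fillings of neighbouring cells agree on their common edge, and a Lipschitz bound
on each cell propagates along rows and columns to a Lipschitz bound on the whole square.
-/

open Metric Set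
open NormedSpace (normalize norm_smul_normalize norm_normalize normalize_smul_of_pos)
open scoped NNReal

noncomputable section

theorem Prod.dist_swap {α β : Type*} [PseudoMetricSpace α] [PseudoMetricSpace β]
    (p q : α × β) : dist p.swap q.swap = dist p q := by
  simp [Prod.dist_eq, max_comm]

theorem Prod.lipschitzWith_swap {α β : Type*} [PseudoMetricSpace α] [PseudoMetricSpace β] :
    LipschitzWith 1 (Prod.swap : α × β → β × α) :=
  LipschitzWith.of_dist_le_mul fun p q => by simp [Prod.dist_swap]

theorem LipschitzOnWith.congr {α β : Type*} [PseudoEMetricSpace α] [PseudoEMetricSpace β]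
    {K : ℝ≥0} {f g : α → β} {s : Set α} (hf : LipschitzOnWith K f s) (h : EqOn f g s) :
    LipschitzOnWith K g s := fun x hx y hy => by
  rw [← h hx, ← h hy]
  exact hf hx hy

theorem LipschitzOnWith.Icc_union_Icc {X : Type*} [PseudoMetricSpace X] {K : ℝ≥0} {f : ℝ → X}
    {a b c : ℝ} (hab : LipschitzOnWith K f (Icc a b)) (hbc : LipschitzOnWith K f (Icc b c)) :
    LipschitzOnWith K f (Icc a c) := by
  have key : ∀ x ∈ Icc a c, ∀ y ∈ Icc a c, x ≤ y → dist (f x) (f y) ≤ K * dist x y := by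
    intro x hx y hy hxy
    by_cases hyb : y ≤ b
    · exact hab.dist_le_mul x ⟨hx.1, hxy.trans hyb⟩ y ⟨hy.1, hyb⟩
    by_cases hxb : b ≤ x
    · exact hbc.dist_le_mul x ⟨hxb, hx.2⟩ y ⟨hxb.trans hxy, hy.2⟩
    rw [not_le] at hyb hxb
    calc dist (f x) (f y) ≤ dist (f x) (f b) + dist (f b) (f y) := dist_triangle _ _ _
      _ ≤ K * dist x b + K * dist b y :=
          add_le_add (hab.dist_le_mul x ⟨hx.1, hxb.le⟩ b ⟨hx.1.trans hxb.le, le_rfl⟩)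
            (hbc.dist_le_mul b ⟨le_rfl, hyb.le.trans hy.2⟩ y ⟨hyb.le, hy.2⟩)
      _ = K * dist x y := by
          simp only [Real.dist_eq, abs_of_nonpos (sub_nonpos.2 hxb.le),
            abs_of_nonpos (sub_nonpos.2 hyb.le), abs_of_nonpos (sub_nonpos.2 hxy)]
          ring
  refine LipschitzOnWith.of_dist_le_mul fun x hx y hy => ?_
  rcases le_total x y with hxy | hyx
  · exact key x hx y hy hxy
  · rw [dist_comm, dist_comm x]
    exact key y hy x hx hyx

theorem Real.eq_or_dist_eq_two_mul_of_mem_sphere {a r x y : ℝ} (hx : x ∈ sphere a r)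
    (hy : y ∈ sphere a r) : x = y ∨ dist x y = 2 * r := by
  rw [mem_sphere, Real.dist_eq] at hx hy
  rcases abs_eq_abs.1 (hx.trans hy.symm) with h | h
  · left
    linarith
  · right
    rw [Real.dist_eq, show x - y = 2 * (x - a) by linarith, abs_mul, hx, abs_two]

namespace LipschitzFilling

section Radial

variable {E F : Type*} [NormedAddCommGroup E] [NormedSpace ℝ E]
  [NormedAddCommGroup F] [NormedSpace ℝ F]

theorem norm_normalize_le_one (x : E) : ‖normalize x‖ ≤ 1 := by
  rcases eq_or_ne x 0 with rfl | hx
  · simp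
  · exact (norm_normalize hx).le

theorem norm_normalize_sub_normalize_le {x : E} (hx : x ≠ 0) (y : E) :
    ‖normalize x - normalize y‖ ≤ 2 * ‖x - y‖ / ‖x‖ := by
  have hx' : 0 < ‖x‖ := norm_pos_iff.2 hx
  have key : normalize x - normalize y =
      ‖x‖⁻¹ • ((x - y) + (‖y‖ - ‖x‖) • normalize y) := by
    rw [sub_smul, norm_smul_normalize, smul_add, smul_sub, smul_sub, inv_smul_smul₀ hx'.ne',
      NormedSpace.normalize]
    abel
  rw [key, norm_smul, norm_inv, norm_norm, inv_mul_le_iff₀ hx', mul_div_cancel₀ _ hx'.ne']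
  calc ‖(x - y) + (‖y‖ - ‖x‖) • normalize y‖
      ≤ ‖x - y‖ + |‖y‖ - ‖x‖| * ‖normalize y‖ := by
        refine (norm_add_le _ _).trans ?_
        rw [norm_smul, Real.norm_eq_abs]
    _ ≤ ‖x - y‖ + ‖x - y‖ * 1 := by
        gcongr
        · rw [abs_sub_comm]
          exact abs_norm_sub_norm_le x y
        · exact norm_normalize_le_one y
    _ = 2 * ‖x - y‖ := by ring

/-- For `Complex.equivRealProdCLM` this carries the round unit disk onto the square
`closedBall (0 : ℝ × ℝ) 1`. -/
def radialRescale (e : E ≃L[ℝ] F) (x : E) : F := ‖x‖ • normalize (e x)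

def radialLipschitzConst (e : E ≃L[ℝ] F) : ℝ≥0 :=
  2 * ‖(e : E →L[ℝ] F)‖₊ * ‖(e.symm : F →L[ℝ] E)‖₊ + 1

variable (e : E ≃L[ℝ] F)

theorem one_le_radialLipschitzConst : 1 ≤ radialLipschitzConst e :=
  le_add_of_nonneg_left (by positivity)

theorem radialLipschitzConst_pos : (0 : ℝ) < radialLipschitzConst e :=
  zero_lt_one.trans_le (one_le_radialLipschitzConst e)

@[simp]
theorem radialRescale_zero : radialRescale e 0 = 0 := by
  simp [radialRescale]

@[simp]
theorem norm_radialRescale (x : E) : ‖radialRescale e x‖ = ‖x‖ := by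
  rcases eq_or_ne x 0 with rfl | hx
  · simp
  · have hex : e x ≠ 0 := by simpa using hx
    rw [radialRescale, norm_smul, norm_normalize hex, norm_norm, mul_one]

@[simp]
theorem radialRescale_symm_radialRescale (x : E) :
    radialRescale e.symm (radialRescale e x) = x := by
  rcases eq_or_ne x 0 with rfl | hx
  · simp
  have hex : 0 < ‖e x‖ := by simpa using hx
  have h : e.symm (‖x‖ • normalize (e x)) = (‖x‖ * ‖e x‖⁻¹) • x := by
    rw [NormedSpace.normalize, smul_smul, map_smul, e.symm_apply_apply]
  rw [radialRescale, norm_radialRescale, radialRescale, h,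
    normalize_smul_of_pos (by positivity), norm_smul_normalize]

@[simp]
theorem radialRescale_radialRescale_symm (y : F) :
    radialRescale e (radialRescale e.symm y) = y := by
  simpa using radialRescale_symm_radialRescale e.symm y

theorem lipschitzWith_radialRescale :
    LipschitzWith (radialLipschitzConst e) (radialRescale e) := by
  refine LipschitzWith.of_dist_le_mul fun x y => ?_
  rcases eq_or_ne x 0 with rfl | hx
  · simpa [dist_zero_left] using
      le_mul_of_one_le_left (norm_nonneg y) (one_le_radialLipschitzConst e : (1 : ℝ) ≤ _)
  have hex : e x ≠ 0 := by simpa using hx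
  have hxe : ‖x‖ / ‖e x‖ ≤ ‖(e.symm : F →L[ℝ] E)‖ := by
    rw [div_le_iff₀ (norm_pos_iff.2 hex)]
    simpa using (e.symm : F →L[ℝ] E).le_opNorm (e x)
  have hdiff : radialRescale e x - radialRescale e y =
      ‖x‖ • (normalize (e x) - normalize (e y)) + (‖x‖ - ‖y‖) • normalize (e y) := by
    simp only [radialRescale, smul_sub, sub_smul]
    abel
  rw [dist_eq_norm, dist_eq_norm, hdiff, radialLipschitzConst]
  push_cast
  calc ‖‖x‖ • (normalize (e x) - normalize (e y)) + (‖x‖ - ‖y‖) • normalize (e y)‖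
      ≤ ‖x‖ * (2 * ‖e x - e y‖ / ‖e x‖) + ‖x - y‖ * 1 := by
        refine (norm_add_le _ _).trans (add_le_add ?_ ?_)
        · rw [norm_smul, norm_norm]
          exact mul_le_mul_of_nonneg_left (norm_normalize_sub_normalize_le hex _) (norm_nonneg _)
        · rw [norm_smul, Real.norm_eq_abs]
          exact mul_le_mul (abs_norm_sub_norm_le x y) (norm_normalize_le_one _) (norm_nonneg _)
            (norm_nonneg _)
    _ = 2 * (‖x‖ / ‖e x‖) * ‖e (x - y)‖ + ‖x - y‖ := by rw [map_sub]; ring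
    _ ≤ 2 * ‖(e.symm : F →L[ℝ] E)‖ * (‖(e : E →L[ℝ] F)‖ * ‖x - y‖) + ‖x - y‖ := by
        gcongr
        exact (e : E →L[ℝ] F).le_opNorm (x - y)
    _ = _ := by ring

def radialChart (c : F) (r : ℝ) (x : E) : F := c + r • radialRescale e x

def radialChartInv (c : F) (r : ℝ) (p : F) : E := radialRescale e.symm (r⁻¹ • (p - c))

variable {e} {c : F} {r : ℝ}

theorem dist_radialChart_center (x : E) : dist (radialChart e c r x) c = |r| * ‖x‖ := by
  simp [radialChart, norm_smul]

theorem norm_radialChartInv (p : F) : ‖radialChartInv e c r p‖ = |r|⁻¹ * dist p c := by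
  simp [radialChartInv, norm_smul, dist_eq_norm]

theorem radialChartInv_radialChart (hr : r ≠ 0) (x : E) :
    radialChartInv e c r (radialChart e c r x) = x := by
  simp [radialChart, radialChartInv, hr]

theorem radialChart_radialChartInv (hr : r ≠ 0) (p : F) :
    radialChart e c r (radialChartInv e c r p) = p := by
  simp [radialChart, radialChartInv, hr]

theorem mapsTo_radialChart_sphere (hr : 0 ≤ r) :
    MapsTo (radialChart e c r) (sphere 0 1) (sphere c r) := fun x hx => by
  rw [mem_sphere_zero_iff_norm] at hx
  rw [mem_sphere, dist_radialChart_center, hx, mul_one, abs_of_nonneg hr]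

theorem mapsTo_radialChart_closedBall (hr : 0 ≤ r) :
    MapsTo (radialChart e c r) (closedBall 0 1) (closedBall c r) := fun x hx => by
  simp only [mem_closedBall, dist_radialChart_center, abs_of_nonneg hr, dist_zero_right] at hx ⊢
  exact mul_le_of_le_one_right hr hx

theorem mapsTo_radialChartInv_sphere (hr : 0 < r) :
    MapsTo (radialChartInv e c r) (sphere c r) (sphere 0 1) := fun p hp => by
  rw [mem_sphere] at hp
  rw [mem_sphere_zero_iff_norm, norm_radialChartInv, hp, abs_of_pos hr, inv_mul_cancel₀ hr.ne']

theorem mapsTo_radialChartInv_closedBall (hr : 0 < r) :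
    MapsTo (radialChartInv e c r) (closedBall c r) (closedBall 0 1) := fun p hp => by
  simp only [mem_closedBall, dist_zero_right, norm_radialChartInv, abs_of_pos hr] at hp ⊢
  rwa [inv_mul_le_iff₀ hr, mul_one]

theorem lipschitzWith_radialChart :
    LipschitzWith (‖r‖₊ * radialLipschitzConst e) (radialChart e c r) :=
  LipschitzWith.of_dist_le_mul fun x y => by
    rw [radialChart, radialChart, dist_add_left, dist_smul₀, NNReal.coe_mul, coe_nnnorm, mul_assoc]
    exact mul_le_mul_of_nonneg_left ((lipschitzWith_radialRescale e).dist_le_mul x y)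
      (norm_nonneg r)

theorem lipschitzWith_radialChartInv :
    LipschitzWith (radialLipschitzConst e.symm * ‖r⁻¹‖₊) (radialChartInv e c r) :=
  (lipschitzWith_radialRescale e.symm).comp <| LipschitzWith.of_dist_le_mul fun p q => by
    rw [dist_smul₀, dist_sub_right, coe_nnnorm]

end Radial

def FillsSmallLoops (E X : Type*) [NormedAddCommGroup E] [PseudoMetricSpace X] (D C : ℝ) :
    Prop :=
  ∀ (L : ℝ) (γ : E → X), 0 < L → L < D →
    (∀ x ∈ sphere (0 : E) 1, ∀ y ∈ sphere (0 : E) 1, dist (γ x) (γ y) ≤ L * dist x y) →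
    ∃ f : E → X, (∀ x ∈ sphere (0 : E) 1, f x = γ x) ∧
      ∀ x ∈ closedBall (0 : E) 1, ∀ y ∈ closedBall (0 : E) 1, dist (f x) (f y) ≤ C * L * dist x y

/-- Closed balls and spheres of the sup metric on `ℝ × ℝ` are squares and their boundaries. -/
def FillsSmallSquares (X : Type*) [PseudoMetricSpace X] (D : ℝ) (C : ℝ≥0) : Prop :=
  ∀ (c : ℝ × ℝ) (r : ℝ) (ℓ : ℝ≥0) (σ : ℝ × ℝ → X), 0 < r → 0 < ℓ → ℓ * r < D →
    LipschitzOnWith ℓ σ (sphere c r) →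
    ∃ G : ℝ × ℝ → X, EqOn G σ (sphere c r) ∧ LipschitzOnWith (C * ℓ) G (closedBall c r)

theorem FillsSmallLoops.fillsSmallSquares {E X : Type*} [NormedAddCommGroup E]
    [NormedSpace ℝ E] [PseudoMetricSpace X] (e : E ≃L[ℝ] ℝ × ℝ) {D C : ℝ}
    (h : FillsSmallLoops E X D C) (hC : 0 ≤ C) :
    FillsSmallSquares X (D / radialLipschitzConst e)
      (C.toNNReal * radialLipschitzConst e * radialLipschitzConst e.symm) := by
  intro c r ℓ σ hr hℓ hℓr hσ
  set L : ℝ≥0 := ℓ * (‖r‖₊ * radialLipschitzConst e)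
  have hL : (L : ℝ) = ℓ * r * radialLipschitzConst e := by simp [L, abs_of_pos hr, mul_assoc]
  have hloop : LipschitzOnWith L (σ ∘ radialChart e c r) (sphere 0 1) :=
    hσ.comp lipschitzWith_radialChart.lipschitzOnWith (mapsTo_radialChart_sphere hr.le)
  obtain ⟨f, hfσ, hf⟩ := h L _
    (by rw [hL]; exact mul_pos (mul_pos (NNReal.coe_pos.2 hℓ) hr) (radialLipschitzConst_pos e))
    (by rwa [hL, ← lt_div_iff₀ (radialLipschitzConst_pos e)])
    fun x hx y hy => hloop.dist_le_mul x hx y hy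
  refine ⟨f ∘ radialChartInv e c r, fun p hp => ?_, ?_⟩
  · rw [Function.comp_apply, hfσ _ (mapsTo_radialChartInv_sphere hr hp), Function.comp_apply,
      radialChart_radialChartInv hr.ne']
  · refine ((LipschitzOnWith.of_dist_le' hf).comp lipschitzWith_radialChartInv.lipschitzOnWith
      (mapsTo_radialChartInv_closedBall hr)).weaken (le_of_eq ?_)
    rw [← NNReal.coe_inj]
    push_cast
    rw [Real.coe_toNNReal _ hC, Real.coe_toNNReal _ (by positivity), hL, Real.norm_eq_abs,
      abs_inv, abs_of_pos hr]
    field_simp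

section Paths

variable {X : Type*}

def concatPaths (P : ℕ → ℝ → X) (x : ℝ) : X := P ⌊x⌋₊ (x - ⌊x⌋₊)

variable {P : ℕ → ℝ → X}

@[simp]
theorem concatPaths_natCast (k : ℕ) : concatPaths P k = P k 0 := by
  simp [concatPaths]

theorem concatPaths_eq {k : ℕ} (hP : P k 1 = P (k + 1) 0) {x : ℝ}
    (hx : x ∈ Icc (k : ℝ) (k + 1)) : concatPaths P x = P k (x - k) := by
  rcases hx.2.lt_or_eq with hlt | rfl
  · rw [concatPaths, (Nat.floor_eq_iff (hx.1.trans' k.cast_nonneg)).2 ⟨hx.1, hlt⟩]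
  · rw [← Nat.cast_succ, concatPaths_natCast, ← hP]
    simp

theorem exists_lt_mem_Icc_natCast {n : ℕ} (hn : 0 < n) {x : ℝ} (hx : x ∈ Icc (0 : ℝ) n) :
    ∃ k < n, x ∈ Icc (k : ℝ) (k + 1) := by
  refine ⟨min ⌊x⌋₊ (n - 1), by omega, ?_, ?_⟩
  · exact (Nat.cast_le.2 (min_le_left _ _)).trans (Nat.floor_le hx.1)
  · rcases le_total ⌊x⌋₊ (n - 1) with h | h
    · rw [min_eq_left h]
      exact (Nat.lt_floor_add_one x).le
    · rw [min_eq_right h, ← Nat.cast_succ, Nat.succ_eq_add_one, Nat.sub_add_cancel hn]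
      exact hx.2

variable [PseudoMetricSpace X]

theorem lipschitzOnWith_Icc_zero_natCast {f : ℝ → X} {K : ℝ≥0} {n : ℕ}
    (h : ∀ k < n, LipschitzOnWith K f (Icc (k : ℝ) (k + 1))) :
    LipschitzOnWith K f (Icc 0 n) := by
  induction n with
  | zero =>
    refine LipschitzOnWith.of_dist_le_mul fun x hx y hy => ?_
    obtain rfl : x = y := by simp only [Nat.cast_zero, mem_Icc] at hx hy; linarith
    simp
  | succ n ih =>
    push_cast
    exact (ih fun k hk => h k (by omega)).Icc_union_Icc (h n n.lt_succ_self)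

theorem lipschitzOnWith_concatPaths {K : ℝ≥0} {n : ℕ} (hP : ∀ k < n, P k 1 = P (k + 1) 0)
    (hK : ∀ k < n, LipschitzOnWith K (P k) (Icc 0 1)) :
    LipschitzOnWith K (concatPaths P) (Icc 0 n) := by
  refine lipschitzOnWith_Icc_zero_natCast fun k hk => ?_
  have hshift : LipschitzWith 1 fun x : ℝ => x - k :=
    LipschitzWith.of_dist_le_mul fun x y => by simp
  have hmaps : MapsTo (fun x : ℝ => x - k) (Icc (k : ℝ) (k + 1)) (Icc 0 1) :=
    fun x hx => ⟨by linarith [hx.1], by linarith [hx.2]⟩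
  simpa using ((hK k hk).comp hshift.lipschitzOnWith hmaps).congr
    fun x hx => (concatPaths_eq (hP k hk) hx).symm

def IsConstSpeedGeodesic (p : ℝ → X) (x y : X) : Prop :=
  p 0 = x ∧ p 1 = y ∧
    ∀ s ∈ Icc (0 : ℝ) 1, ∀ t ∈ Icc (0 : ℝ) 1, dist (p s) (p t) = |s - t| * dist x y

theorem IsConstSpeedGeodesic.lipschitzOnWith {p : ℝ → X} {x y : X}
    (hp : IsConstSpeedGeodesic p x y) : LipschitzOnWith (nndist x y) p (Icc 0 1) :=
  LipschitzOnWith.of_dist_le_mul fun s hs t ht => by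
    rw [hp.2.2 s hs t ht, coe_nndist, Real.dist_eq, mul_comm]

open Classical in
/-- The constant path at `x` if there is no geodesic: either way the path starts at `x`. -/
def geodesicPath (x y : X) : ℝ → X :=
  if h : ∃ p, IsConstSpeedGeodesic p x y then h.choose else fun _ => x

@[simp]
theorem geodesicPath_zero (x y : X) : geodesicPath x y 0 = x := by
  unfold geodesicPath
  split_ifs with h
  exacts [h.choose_spec.1, rfl]

theorem isConstSpeedGeodesic_geodesicPath {x y : X} (h : ∃ p, IsConstSpeedGeodesic p x y) :
    IsConstSpeedGeodesic (geodesicPath x y) x y := by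
  rw [geodesicPath, dif_pos h]
  exact h.choose_spec

def rowPath (V : ℕ → ℕ → X) (l : ℕ) : ℝ → X :=
  concatPaths fun k => geodesicPath (V k l) (V (k + 1) l)

@[simp]
theorem rowPath_natCast (V : ℕ → ℕ → X) (k l : ℕ) : rowPath V l k = V k l := by
  simp [rowPath]

theorem lipschitzOnWith_rowPath {ε : ℝ≥0}
    (hgeo : ∀ x y : X, dist x y ≤ ε → ∃ p, IsConstSpeedGeodesic p x y)
    {V : ℕ → ℕ → X} {n l : ℕ} (hV : ∀ k < n, dist (V k l) (V (k + 1) l) ≤ ε) :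
    LipschitzOnWith ε (rowPath V l) (Icc 0 n) := by
  have hg := fun k (hk : k < n) => isConstSpeedGeodesic_geodesicPath (hgeo _ _ (hV k hk))
  refine lipschitzOnWith_concatPaths (fun k hk => by simp [(hg k hk).2.1]) fun k hk =>
    (hg k hk).lipschitzOnWith.weaken ?_
  exact_mod_cast hV k hk

end Paths

section Squares

variable {X : Type*} [PseudoMetricSpace X] {f : ℝ × ℝ → X} {c : ℝ × ℝ} {r : ℝ} {K : ℝ≥0}

theorem dist_le_of_opposite_sides
    (h₁ : ∀ y ∈ sphere c.2 r, LipschitzOnWith K (fun x => f (x, y)) (closedBall c.1 r))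
    (h₂ : ∀ x ∈ sphere c.1 r, LipschitzOnWith K (fun y => f (x, y)) (closedBall c.2 r))
    {x₁ x₂ y₁ y₂ : ℝ} (hx₁ : x₁ ∈ sphere c.1 r) (hx₂ : x₂ ∈ sphere c.1 r)
    (hy₁ : y₁ ∈ closedBall c.2 r) (hy₂ : y₂ ∈ closedBall c.2 r) :
    dist (f (x₁, y₁)) (f (x₂, y₂)) ≤ 3 * K * dist (x₁, y₁) (x₂, y₂) := by
  have hdist : dist x₁ x₂ ≤ dist (x₁, y₁) (x₂, y₂) := by simp [Prod.dist_eq]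
  rcases Real.eq_or_dist_eq_two_mul_of_mem_sphere hx₁ hx₂ with rfl | hx₁₂
  · calc dist (f (x₁, y₁)) (f (x₁, y₂)) ≤ K * dist y₁ y₂ := (h₂ x₁ hx₁).dist_le_mul _ hy₁ _ hy₂
      _ = 1 * K * dist (x₁, y₁) (x₁, y₂) := by rw [dist_prod_same_left, one_mul]
      _ ≤ 3 * K * dist (x₁, y₁) (x₁, y₂) := by gcongr; norm_num
  -- go around the square through the two corners at height `c.2 - r`
  have hr : 0 ≤ r := mem_sphere.1 hx₁ ▸ dist_nonneg
  have hy₀ : c.2 - r ∈ sphere c.2 r := by simp [abs_of_nonneg hr]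
  have hy₀' := sphere_subset_closedBall hy₀
  have hside : ∀ y ∈ closedBall c.2 r, dist y (c.2 - r) ≤ 2 * r := fun y hy => by
    rw [mem_closedBall] at hy hy₀'
    linarith [dist_triangle y c.2 (c.2 - r), dist_comm c.2 (c.2 - r)]
  calc dist (f (x₁, y₁)) (f (x₂, y₂))
      ≤ dist (f (x₁, y₁)) (f (x₁, c.2 - r)) + dist (f (x₁, c.2 - r)) (f (x₂, c.2 - r))
        + dist (f (x₂, c.2 - r)) (f (x₂, y₂)) := dist_triangle4 _ _ _ _
    _ ≤ K * (2 * r) + K * (2 * r) + K * (2 * r) := by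
        gcongr
        · exact ((h₂ x₁ hx₁).dist_le_mul _ hy₁ _ hy₀').trans
            (mul_le_mul_of_nonneg_left (hside y₁ hy₁) K.2)
        · exact ((h₁ _ hy₀).dist_le_mul _ (sphere_subset_closedBall hx₁) _
            (sphere_subset_closedBall hx₂)).trans_eq (by rw [hx₁₂])
        · rw [dist_comm]
          exact ((h₂ x₂ hx₂).dist_le_mul _ hy₂ _ hy₀').trans
            (mul_le_mul_of_nonneg_left (hside y₂ hy₂) K.2)
    _ = 3 * K * dist x₁ x₂ := by rw [hx₁₂]; ring
    _ ≤ 3 * K * dist (x₁, y₁) (x₂, y₂) := by gcongr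

theorem dist_le_of_adjacent_sides
    (h₁ : ∀ y ∈ sphere c.2 r, LipschitzOnWith K (fun x => f (x, y)) (closedBall c.1 r))
    (h₂ : ∀ x ∈ sphere c.1 r, LipschitzOnWith K (fun y => f (x, y)) (closedBall c.2 r))
    {x₁ x₂ y₁ y₂ : ℝ} (hx₁ : x₁ ∈ sphere c.1 r) (hx₂ : x₂ ∈ closedBall c.1 r)
    (hy₁ : y₁ ∈ closedBall c.2 r) (hy₂ : y₂ ∈ sphere c.2 r) :
    dist (f (x₁, y₁)) (f (x₂, y₂)) ≤ 3 * K * dist (x₁, y₁) (x₂, y₂) := by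
  calc dist (f (x₁, y₁)) (f (x₂, y₂))
      ≤ dist (f (x₁, y₁)) (f (x₁, y₂)) + dist (f (x₁, y₂)) (f (x₂, y₂)) := dist_triangle _ _ _
    _ ≤ K * dist y₁ y₂ + K * dist x₁ x₂ :=
        add_le_add ((h₂ x₁ hx₁).dist_le_mul _ hy₁ _ (sphere_subset_closedBall hy₂))
          ((h₁ y₂ hy₂).dist_le_mul _ (sphere_subset_closedBall hx₁) _ hx₂)
    _ ≤ K * dist (x₁, y₁) (x₂, y₂) + K * dist (x₁, y₁) (x₂, y₂) := by
        gcongr <;> simp [Prod.dist_eq]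
    _ = 2 * K * dist (x₁, y₁) (x₂, y₂) := by ring
    _ ≤ 3 * K * dist (x₁, y₁) (x₂, y₂) := by gcongr; norm_num

theorem lipschitzOnWith_sphere_of_sides
    (h₁ : ∀ y ∈ sphere c.2 r, LipschitzOnWith K (fun x => f (x, y)) (closedBall c.1 r))
    (h₂ : ∀ x ∈ sphere c.1 r, LipschitzOnWith K (fun y => f (x, y)) (closedBall c.2 r)) :
    LipschitzOnWith (3 * K) f (sphere c r) := by
  refine LipschitzOnWith.of_dist_le_mul fun p hp q hq => ?_
  rw [sphere_prod] at hp hq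
  obtain ⟨x₁, y₁⟩ := p
  obtain ⟨x₂, y₂⟩ := q
  rcases hp with ⟨hx₁, hy₁⟩ | ⟨hx₁, hy₁⟩ <;> rcases hq with ⟨hx₂, hy₂⟩ | ⟨hx₂, hy₂⟩
  · exact dist_le_of_opposite_sides h₁ h₂ hx₁ hx₂ hy₁ hy₂
  · exact dist_le_of_adjacent_sides h₁ h₂ hx₁ hx₂ hy₁ hy₂
  · rw [dist_comm, dist_comm (x₁, y₁)]
    exact dist_le_of_adjacent_sides h₁ h₂ hx₂ hx₁ hy₂ hy₁
  · rw [← Prod.dist_swap]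
    exact dist_le_of_opposite_sides (f := f ∘ Prod.swap) (c := c.swap) h₂ h₁ hy₁ hy₂ hx₁ hx₂

end Squares

section Grid

def cellCenter (k l : ℕ) : ℝ × ℝ := ((k : ℝ) + 1 / 2, (l : ℝ) + 1 / 2)

def squareCenter (n : ℕ) : ℝ × ℝ := ((n : ℝ) / 2, (n : ℝ) / 2)

theorem closedBall_natCast_add_half (k : ℕ) :
    closedBall ((k : ℝ) + 1 / 2) (1 / 2) = Icc (k : ℝ) (k + 1) := by
  rw [Real.closedBall_eq_Icc]
  norm_num [add_assoc]

theorem mem_sphere_natCast_add_half {k : ℕ} {y : ℝ} :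
    y ∈ sphere ((k : ℝ) + 1 / 2) (1 / 2) ↔ y = k ∨ y = k + 1 := by
  rw [Real.sphere_eq_pair _ (by norm_num), mem_insert_iff, mem_singleton_iff]
  norm_num [add_assoc]

theorem closedBall_half_natCast (n : ℕ) :
    closedBall ((n : ℝ) / 2) (n / 2) = Icc (0 : ℝ) n := by
  rw [Real.closedBall_eq_Icc]
  norm_num

theorem mem_sphere_half_natCast {n : ℕ} {y : ℝ} :
    y ∈ sphere ((n : ℝ) / 2) (n / 2) ↔ y = 0 ∨ y = n := by
  rw [Real.sphere_eq_pair _ (by positivity), mem_insert_iff, mem_singleton_iff]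
  norm_num

theorem closedBall_cellCenter (k l : ℕ) :
    closedBall (cellCenter k l) (1 / 2) = Icc (k : ℝ) (k + 1) ×ˢ Icc (l : ℝ) (l + 1) := by
  rw [cellCenter, ← closedBall_prod_same, closedBall_natCast_add_half, closedBall_natCast_add_half]

theorem closedBall_squareCenter (n : ℕ) :
    closedBall (squareCenter n) (n / 2) = Icc (0 : ℝ) n ×ˢ Icc (0 : ℝ) n := by
  rw [squareCenter, ← closedBall_prod_same, closedBall_half_natCast]

theorem mk_mem_sphere_squareCenter {n : ℕ} {x y : ℝ} :
    (x, y) ∈ sphere (squareCenter n) (n / 2) ↔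
      ((x = 0 ∨ x = n) ∧ y ∈ Icc (0 : ℝ) n) ∨ (x ∈ Icc (0 : ℝ) n ∧ (y = 0 ∨ y = n)) := by
  rw [squareCenter, sphere_prod]
  simp only [mem_union, mem_prod, mem_sphere_half_natCast, closedBall_half_natCast]

theorem natCast_mem_sphere_of_mem_Icc {k m : ℕ} (hm : (m : ℝ) ∈ Icc (k : ℝ) (k + 1)) :
    (m : ℝ) ∈ sphere ((k : ℝ) + 1 / 2) (1 / 2) := by
  have h₁ : k ≤ m := by exact_mod_cast hm.1
  have h₂ : m ≤ k + 1 := by exact_mod_cast hm.2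
  rw [mem_sphere_natCast_add_half]
  rcases (show m = k ∨ m = k + 1 by omega) with rfl | rfl
  exacts [Or.inl rfl, Or.inr (by push_cast; rfl)]

theorem exists_natCast_eq_of_mem_Icc_of_mem_Icc {k k' : ℕ} (hne : k ≠ k') {x : ℝ}
    (hx : x ∈ Icc (k : ℝ) (k + 1)) (hx' : x ∈ Icc (k' : ℝ) (k' + 1)) : ∃ m : ℕ, x = m := by
  rcases hne.lt_or_gt with h | h
  · have : (k : ℝ) + 1 ≤ k' := by exact_mod_cast h
    exact ⟨k', by linarith [hx.2, hx'.1]⟩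
  · have : (k' : ℝ) + 1 ≤ k := by exact_mod_cast h
    exact ⟨k, by linarith [hx.1, hx'.2]⟩

theorem exists_mem_closedBall_cellCenter {n : ℕ} (hn : 0 < n) {p : ℝ × ℝ}
    (hp : p ∈ closedBall (squareCenter n) (n / 2)) :
    ∃ k < n, ∃ l < n, p ∈ closedBall (cellCenter k l) (1 / 2) := by
  rw [closedBall_squareCenter] at hp
  obtain ⟨k, hk, hpk⟩ := exists_lt_mem_Icc_natCast hn hp.1
  obtain ⟨l, hl, hpl⟩ := exists_lt_mem_Icc_natCast hn hp.2
  exact ⟨k, hk, l, hl, by rw [closedBall_cellCenter]; exact ⟨hpk, hpl⟩⟩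

theorem mem_sphere_cellCenter {k l : ℕ} {p : ℝ × ℝ} (hp : p ∈ closedBall (cellCenter k l) (1 / 2))
    (hnat : (∃ m : ℕ, p.1 = m) ∨ ∃ m : ℕ, p.2 = m) : p ∈ sphere (cellCenter k l) (1 / 2) := by
  rw [closedBall_cellCenter, mem_prod] at hp
  rw [cellCenter, sphere_prod]
  simp only [closedBall_natCast_add_half]
  rcases hnat with ⟨m, hm⟩ | ⟨m, hm⟩
  · refine Or.inl ⟨?_, hp.2⟩
    rw [hm] at hp ⊢
    exact natCast_mem_sphere_of_mem_Icc hp.1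
  · refine Or.inr ⟨hp.1, ?_⟩
    rw [hm] at hp ⊢
    exact natCast_mem_sphere_of_mem_Icc hp.2

theorem mem_sphere_cellCenter_of_ne {k l k' l' : ℕ} (hne : (k, l) ≠ (k', l')) {p : ℝ × ℝ}
    (hp : p ∈ closedBall (cellCenter k l) (1 / 2))
    (hp' : p ∈ closedBall (cellCenter k' l') (1 / 2)) : p ∈ sphere (cellCenter k l) (1 / 2) := by
  refine mem_sphere_cellCenter hp ?_
  rw [closedBall_cellCenter] at hp hp'
  by_cases hk : k = k'
  · exact Or.inr (exists_natCast_eq_of_mem_Icc_of_mem_Icc (by rintro rfl; exact hne (by rw [hk]))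
      hp.2 hp'.2)
  · exact Or.inl (exists_natCast_eq_of_mem_Icc_of_mem_Icc hk hp.1 hp'.1)

theorem mem_sphere_cellCenter_of_mem_sphere_squareCenter {n k l : ℕ} {p : ℝ × ℝ}
    (hp : p ∈ closedBall (cellCenter k l) (1 / 2)) (hpn : p ∈ sphere (squareCenter n) (n / 2)) :
    p ∈ sphere (cellCenter k l) (1 / 2) := by
  refine mem_sphere_cellCenter hp ?_
  rw [squareCenter, sphere_prod] at hpn
  rcases hpn with ⟨h, -⟩ | ⟨-, h⟩ <;> rw [mem_sphere_half_natCast] at h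
  · exact Or.inl (h.elim (fun h => ⟨0, by simp [h]⟩) fun h => ⟨n, h⟩)
  · exact Or.inr (h.elim (fun h => ⟨0, by simp [h]⟩) fun h => ⟨n, h⟩)

theorem exists_eqOn_closedBall_cellCenter {X : Type*} {n : ℕ} {S : ℝ × ℝ → X}
    {G : ℕ → ℕ → ℝ × ℝ → X}
    (hG : ∀ k < n, ∀ l < n, EqOn (G k l) S (sphere (cellCenter k l) (1 / 2))) :
    ∃ F : ℝ × ℝ → X, ∀ k < n, ∀ l < n, EqOn F (G k l) (closedBall (cellCenter k l) (1 / 2)) := by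
  classical
  let cells (p : ℝ × ℝ) : Prop :=
    ∃ c : ℕ × ℕ, c.1 < n ∧ c.2 < n ∧ p ∈ closedBall (cellCenter c.1 c.2) (1 / 2)
  refine ⟨fun p => if h : cells p then G h.choose.1 h.choose.2 p else S p,
    fun k hk l hl p hp => ?_⟩
  have h : cells p := ⟨(k, l), hk, hl, hp⟩
  simp only [dif_pos h]
  obtain ⟨hk', hl', hp'⟩ := h.choose_spec
  by_cases hc : h.choose = (k, l)
  · rw [hc]
  · rw [hG _ hk' _ hl' (mem_sphere_cellCenter_of_ne hc hp' hp),
      hG k hk l hl (mem_sphere_cellCenter_of_ne (Ne.symm hc) hp hp')]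

variable {X : Type*} [PseudoMetricSpace X] {n : ℕ} {K : ℝ≥0} {f : ℝ × ℝ → X}

theorem lipschitzOnWith_row_of_cells (hn : 0 < n)
    (hf : ∀ k < n, ∀ l < n, LipschitzOnWith K f (closedBall (cellCenter k l) (1 / 2)))
    {y : ℝ} (hy : y ∈ Icc (0 : ℝ) n) : LipschitzOnWith K (fun x => f (x, y)) (Icc 0 n) := by
  obtain ⟨l, hl, hyl⟩ := exists_lt_mem_Icc_natCast hn hy
  refine lipschitzOnWith_Icc_zero_natCast fun k hk => ?_
  have := (hf k hk l hl).comp (LipschitzWith.prodMk_right y).lipschitzOnWith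
    fun x hx => by rw [closedBall_cellCenter]; exact ⟨hx, hyl⟩
  rwa [mul_one] at this

theorem lipschitzOnWith_square_of_cells (hn : 0 < n)
    (hf : ∀ k < n, ∀ l < n, LipschitzOnWith K f (closedBall (cellCenter k l) (1 / 2))) :
    LipschitzOnWith (2 * K) f (closedBall (squareCenter n) (n / 2)) := by
  have hswap : ∀ k < n, ∀ l < n,
      LipschitzOnWith K (f ∘ Prod.swap) (closedBall (cellCenter k l) (1 / 2)) := by
    intro k hk l hl
    have hmaps : MapsTo Prod.swap (closedBall (cellCenter k l) (1 / 2))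
        (closedBall (cellCenter l k) (1 / 2)) := fun p hp => by
      rw [closedBall_cellCenter] at hp ⊢
      exact ⟨hp.2, hp.1⟩
    have := (hf l hl k hk).comp Prod.lipschitzWith_swap.lipschitzOnWith hmaps
    rwa [mul_one] at this
  refine LipschitzOnWith.of_dist_le_mul fun p hp q hq => ?_
  rw [closedBall_squareCenter] at hp hq
  calc dist (f p) (f q)
      ≤ dist (f (p.1, p.2)) (f (q.1, p.2)) + dist (f (q.1, p.2)) (f (q.1, q.2)) :=
        dist_triangle _ _ _
    _ ≤ K * dist p.1 q.1 + K * dist p.2 q.2 := add_le_add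
        ((lipschitzOnWith_row_of_cells hn hf hp.2).dist_le_mul _ hp.1 _ hq.1)
        ((lipschitzOnWith_row_of_cells hn hswap hq.1).dist_le_mul _ hp.2 _ hq.2)
    _ ≤ K * dist p q + K * dist p q := by gcongr <;> simp [Prod.dist_eq]
    _ = 2 * K * dist p q := by ring

end Grid

section Skeleton

variable {X : Type*} [PseudoMetricSpace X]

open Classical in
/-- On the boundary of `[0, n]²` this is `σ`; on the other grid lines it follows geodesics
between the labels `V` of adjacent vertices. Its values off the grid lines are never used. -/
def skeleton (n : ℕ) (σ : ℝ × ℝ → X) (V : ℕ → ℕ → X) (p : ℝ × ℝ) : X :=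
  if p ∈ sphere (squareCenter n) (n / 2) then σ p
  else if (⌊p.2⌋₊ : ℝ) = p.2 then rowPath V ⌊p.2⌋₊ p.1
  else rowPath (fun k l => V l k) ⌊p.1⌋₊ p.2

variable {n : ℕ} {σ : ℝ × ℝ → X} {V : ℕ → ℕ → X}
  (hVσ : ∀ k l : ℕ, ((k : ℝ), (l : ℝ)) ∈ sphere (squareCenter n) (n / 2) → V k l = σ (k, l))
include hVσ

theorem skeleton_natCast_natCast (k l : ℕ) : skeleton n σ V (k, l) = V k l := by
  by_cases h : ((k : ℝ), (l : ℝ)) ∈ sphere (squareCenter n) (n / 2)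
  · rw [skeleton, if_pos h, hVσ k l h]
  · rw [skeleton, if_neg h, if_pos (by simp)]
    simp

theorem skeleton_row {l : ℕ} (hl₀ : 0 < l) (hln : l < n) (x : ℝ) :
    skeleton n σ V (x, l) = rowPath V l x := by
  by_cases h : (x, (l : ℝ)) ∈ sphere (squareCenter n) (n / 2)
  · obtain ⟨k, rfl⟩ : ∃ k : ℕ, x = k := by
      rw [mk_mem_sphere_squareCenter] at h
      rcases h with ⟨rfl | rfl, -⟩ | ⟨-, h | h⟩
      · exact ⟨0, by simp⟩
      · exact ⟨n, rfl⟩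
      · exact absurd h (by positivity)
      · exact absurd h (by exact_mod_cast hln.ne)
    rw [skeleton_natCast_natCast hVσ, rowPath_natCast]
  · rw [skeleton, if_neg h, if_pos (by simp)]
    simp

theorem skeleton_col {k : ℕ} (hk₀ : 0 < k) (hkn : k < n) (y : ℝ) :
    skeleton n σ V (k, y) = rowPath (fun k l => V l k) k y := by
  by_cases h : ∃ l : ℕ, y = l
  · obtain ⟨l, rfl⟩ := h
    rw [skeleton_natCast_natCast hVσ, rowPath_natCast]
  by_cases hs : ((k : ℝ), y) ∈ sphere (squareCenter n) (n / 2)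
  · rw [mk_mem_sphere_squareCenter] at hs
    rcases hs with ⟨h₀ | h₀, -⟩ | ⟨-, rfl | rfl⟩
    · exact absurd h₀ (by positivity)
    · exact absurd h₀ (by exact_mod_cast hkn.ne)
    · exact absurd ⟨0, by simp⟩ h
    · exact absurd ⟨n, rfl⟩ h
  · have hfl : (⌊y⌋₊ : ℝ) ≠ y := fun h' => h ⟨_, h'.symm⟩
    rw [skeleton, if_neg hs, if_neg hfl]
    simp

theorem lipschitzOnWith_skeleton_row {ε : ℝ≥0}
    (hgeo : ∀ x y : X, dist x y ≤ ε → ∃ p, IsConstSpeedGeodesic p x y)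
    (hσ : LipschitzOnWith ε σ (sphere (squareCenter n) (n / 2)))
    (hV : ∀ k < n, ∀ l ≤ n, dist (V k l) (V (k + 1) l) ≤ ε) {l : ℕ} (hl : l ≤ n) :
    LipschitzOnWith ε (fun x => skeleton n σ V (x, l)) (Icc 0 n) := by
  by_cases hb : l = 0 ∨ l = n
  · have hmaps : MapsTo (fun x : ℝ => (x, (l : ℝ))) (Icc 0 n) (sphere (squareCenter n) (n / 2)) :=
      fun x hx => mk_mem_sphere_squareCenter.2 <| Or.inr ⟨hx, by rcases hb with rfl | rfl <;> simp⟩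
    have := hσ.comp (LipschitzWith.prodMk_right (l : ℝ)).lipschitzOnWith hmaps
    rw [mul_one] at this
    exact this.congr fun x hx => (if_pos (hmaps hx)).symm
  · rw [not_or] at hb
    exact (lipschitzOnWith_rowPath hgeo fun k hk => hV k hk l hl).congr fun x _ =>
      (skeleton_row hVσ (Nat.pos_of_ne_zero hb.1) (lt_of_le_of_ne hl hb.2) x).symm

theorem lipschitzOnWith_skeleton_col {ε : ℝ≥0}
    (hgeo : ∀ x y : X, dist x y ≤ ε → ∃ p, IsConstSpeedGeodesic p x y)
    (hσ : LipschitzOnWith ε σ (sphere (squareCenter n) (n / 2)))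
    (hV : ∀ k ≤ n, ∀ l < n, dist (V k l) (V k (l + 1)) ≤ ε) {k : ℕ} (hk : k ≤ n) :
    LipschitzOnWith ε (fun y => skeleton n σ V (k, y)) (Icc 0 n) := by
  by_cases hb : k = 0 ∨ k = n
  · have hmaps : MapsTo (fun y : ℝ => ((k : ℝ), y)) (Icc 0 n) (sphere (squareCenter n) (n / 2)) :=
      fun y hy => mk_mem_sphere_squareCenter.2 <| Or.inl ⟨by rcases hb with rfl | rfl <;> simp, hy⟩
    have := hσ.comp (LipschitzWith.prodMk_left (k : ℝ)).lipschitzOnWith hmaps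
    rw [mul_one] at this
    exact this.congr fun y hy => (if_pos (hmaps hy)).symm
  · rw [not_or] at hb
    exact (lipschitzOnWith_rowPath hgeo fun l hl => hV k hk l hl).congr fun y _ =>
      (skeleton_col hVσ (Nat.pos_of_ne_zero hb.1) (lt_of_le_of_ne hk hb.2) y).symm

theorem lipschitzOnWith_skeleton_sphere_cellCenter {ε : ℝ≥0}
    (hgeo : ∀ x y : X, dist x y ≤ ε → ∃ p, IsConstSpeedGeodesic p x y)
    (hσ : LipschitzOnWith ε σ (sphere (squareCenter n) (n / 2)))
    (hV₁ : ∀ k < n, ∀ l ≤ n, dist (V k l) (V (k + 1) l) ≤ ε)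
    (hV₂ : ∀ k ≤ n, ∀ l < n, dist (V k l) (V k (l + 1)) ≤ ε) {k l : ℕ} (hk : k < n) (hl : l < n) :
    LipschitzOnWith (3 * ε) (skeleton n σ V) (sphere (cellCenter k l) (1 / 2)) := by
  refine lipschitzOnWith_sphere_of_sides (fun y hy => ?_) fun x hx => ?_
  · rw [cellCenter, closedBall_natCast_add_half]
    obtain ⟨j, hj, rfl⟩ : ∃ j ≤ n, y = j := by
      rcases mem_sphere_natCast_add_half.1 hy with rfl | rfl
      exacts [⟨l, hl.le, rfl⟩, ⟨l + 1, hl, by push_cast; rfl⟩]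
    exact (lipschitzOnWith_skeleton_row hVσ hgeo hσ hV₁ hj).mono
      (Icc_subset_Icc k.cast_nonneg (by exact_mod_cast hk))
  · rw [cellCenter, closedBall_natCast_add_half]
    obtain ⟨j, hj, rfl⟩ : ∃ j ≤ n, x = j := by
      rcases mem_sphere_natCast_add_half.1 hx with rfl | rfl
      exacts [⟨k, hk.le, rfl⟩, ⟨k + 1, hk, by push_cast; rfl⟩]
    exact (lipschitzOnWith_skeleton_col hVσ hgeo hσ hV₂ hj).mono
      (Icc_subset_Icc l.cast_nonneg (by exact_mod_cast hl))

end Skeleton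

theorem exists_lipschitzOnWith_grid_filling {X : Type*} [PseudoMetricSpace X] {D : ℝ}
    {C ε : ℝ≥0} (hfill : FillsSmallSquares X D C) (hε : 0 < ε) (hεD : 3 * ε < 2 * D)
    (hgeo : ∀ x y : X, dist x y ≤ ε → ∃ p, IsConstSpeedGeodesic p x y)
    {n : ℕ} (hn : 0 < n) {σ : ℝ × ℝ → X}
    (hσ : LipschitzOnWith ε σ (sphere (squareCenter n) (n / 2))) {V : ℕ → ℕ → X}
    (hVσ : ∀ k l : ℕ, ((k : ℝ), (l : ℝ)) ∈ sphere (squareCenter n) (n / 2) → V k l = σ (k, l))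
    (hV₁ : ∀ k < n, ∀ l ≤ n, dist (V k l) (V (k + 1) l) ≤ ε)
    (hV₂ : ∀ k ≤ n, ∀ l < n, dist (V k l) (V k (l + 1)) ≤ ε) :
    ∃ F : ℝ × ℝ → X, EqOn F σ (sphere (squareCenter n) (n / 2)) ∧
      LipschitzOnWith (2 * (C * (3 * ε))) F (closedBall (squareCenter n) (n / 2)) := by
  have hcell : ∀ k l, ∃ G : ℝ × ℝ → X, k < n → l < n →
      EqOn G (skeleton n σ V) (sphere (cellCenter k l) (1 / 2)) ∧
        LipschitzOnWith (C * (3 * ε)) G (closedBall (cellCenter k l) (1 / 2)) := by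
    intro k l
    by_cases hkl : k < n ∧ l < n
    · obtain ⟨G, hG⟩ := hfill (cellCenter k l) (1 / 2) (3 * ε) (skeleton n σ V) one_half_pos
        (by positivity) (by push_cast; linarith)
        (lipschitzOnWith_skeleton_sphere_cellCenter hVσ hgeo hσ hV₁ hV₂ hkl.1 hkl.2)
      exact ⟨G, fun _ _ => hG⟩
    · exact ⟨σ, fun hk hl => absurd ⟨hk, hl⟩ hkl⟩
  choose G hG using hcell
  obtain ⟨F, hF⟩ := exists_eqOn_closedBall_cellCenter fun k hk l hl => (hG k l hk hl).1
  refine ⟨F, fun p hp => ?_, lipschitzOnWith_square_of_cells hn fun k hk l hl =>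
    (hG k l hk hl).2.congr (hF k hk l hl).symm⟩
  obtain ⟨k, hk, l, hl, hpkl⟩ :=
    exists_mem_closedBall_cellCenter hn (sphere_subset_closedBall hp)
  rw [hF k hk l hl hpkl,
    (hG k l hk hl).1 (mem_sphere_cellCenter_of_mem_sphere_squareCenter hpkl hp)]
  exact if_pos hp

theorem exists_lipschitzWith_radialChartInv_lt {E : Type*} [NormedAddCommGroup E]
    [NormedSpace ℝ E] (e : E ≃L[ℝ] ℝ × ℝ) {η : ℝ} (hη : 0 < η) :
    ∃ n : ℕ, 0 < n ∧ ∃ K : ℝ≥0, (K : ℝ) < η ∧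
      LipschitzWith K (radialChartInv e (squareCenter n) (n / 2)) := by
  obtain ⟨n, hn⟩ := exists_nat_gt (2 * radialLipschitzConst e.symm / η)
  have hn₀ : (0 : ℝ) < n := lt_of_le_of_lt (by positivity) hn
  refine ⟨n, by exact_mod_cast hn₀, _, ?_, lipschitzWith_radialChartInv⟩
  rw [div_lt_iff₀ hη] at hn
  simp only [NNReal.coe_mul, coe_nnnorm, Real.norm_eq_abs, abs_inv, abs_of_pos (half_pos hn₀)]
  rw [← div_eq_mul_inv, div_lt_iff₀ (half_pos hn₀)]
  linarith

theorem exists_lipschitzOnWith_disk_filling {E X : Type*} [NormedAddCommGroup E]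
    [NormedSpace ℝ E] [ProperSpace E] [PseudoMetricSpace X] (e : E ≃L[ℝ] ℝ × ℝ) {D D' : ℝ}
    {C L : ℝ≥0} (hfill : FillsSmallSquares X D C) (hD : 0 < D) (hD' : 0 < D')
    (hgeo : ∀ x y : X, dist x y < D' → ∃ p, IsConstSpeedGeodesic p x y)
    {γ g : E → X} (hγ : LipschitzOnWith L γ (sphere 0 1)) (hg : ContinuousOn g (closedBall 0 1))
    (hgγ : EqOn g γ (sphere 0 1)) :
    ∃ K : ℝ≥0, ∃ f : E → X, EqOn f γ (sphere 0 1) ∧ LipschitzOnWith K f (closedBall 0 1) := by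
  set ε : ℝ≥0 := (min D D' / 2).toNNReal
  have hε : (ε : ℝ) = min D D' / 2 := Real.coe_toNNReal _ (by positivity)
  have hε₀ : (0 : ℝ) < ε := by rw [hε]; positivity
  obtain ⟨δ, hδ, hgδ⟩ := Metric.uniformContinuousOn_iff.1
    ((isCompact_closedBall 0 1).uniformContinuousOn_of_continuous hg) ε hε₀
  obtain ⟨n, hn, K, hK, hψ⟩ :=
    exists_lipschitzWith_radialChartInv_lt e (η := min δ (ε / (L + 1))) (by positivity)
  set ψ := radialChartInv e (squareCenter n) (n / 2)
  have hr : (0 : ℝ) < n / 2 := by positivity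
  have hσ : LipschitzOnWith ε (γ ∘ ψ) (sphere (squareCenter n) (n / 2)) := by
    refine (hγ.comp hψ.lipschitzOnWith (mapsTo_radialChartInv_sphere hr)).weaken ?_
    have hKε : (K : ℝ) * (L + 1) < ε :=
      (lt_div_iff₀ (by positivity)).1 (hK.trans_le (min_le_right _ _))
    rw [← NNReal.coe_le_coe, NNReal.coe_mul]
    nlinarith [K.2]
  have hV : ∀ p ∈ closedBall (squareCenter n) (n / 2), ∀ q ∈ closedBall (squareCenter n) (n / 2),
      dist p q = 1 → dist (g (ψ p)) (g (ψ q)) ≤ ε := fun p hp q hq hpq =>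
    (hgδ _ (mapsTo_radialChartInv_closedBall hr hp) _ (mapsTo_radialChartInv_closedBall hr hq)
      ((hψ.dist_le_mul p q).trans_lt (by
        rw [hpq, mul_one]
        exact hK.trans_le (min_le_left _ _)))).le
  have hgrid : ∀ k l : ℕ, k ≤ n → l ≤ n →
      ((k : ℝ), (l : ℝ)) ∈ closedBall (squareCenter n) (n / 2) := by
    intro k l hk hl
    rw [closedBall_squareCenter]
    exact ⟨⟨k.cast_nonneg, Nat.cast_le.2 hk⟩, ⟨l.cast_nonneg, Nat.cast_le.2 hl⟩⟩
  obtain ⟨F, hFσ, hF⟩ := exists_lipschitzOnWith_grid_filling hfill (by exact_mod_cast hε₀)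
    (by rw [hε]; linarith [min_le_left D D'])
    (fun x y h => hgeo x y (by rw [hε] at h; linarith [min_le_right D D'])) hn hσ
    (V := fun k l => g (ψ (k, l))) (fun k l hkl => hgγ (mapsTo_radialChartInv_sphere hr hkl))
    (fun k hk l hl => hV _ (hgrid k l hk.le hl) _ (hgrid (k + 1) l hk hl) (by simp [Prod.dist_eq]))
    (fun k hk l hl => hV _ (hgrid k l hk hl.le) _ (hgrid k (l + 1) hk hl) (by simp [Prod.dist_eq]))
  refine ⟨_, F ∘ radialChart e (squareCenter n) (n / 2), fun z hz => ?_,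
    hF.comp lipschitzWith_radialChart.lipschitzOnWith (mapsTo_radialChart_closedBall hr.le)⟩
  rw [Function.comp_apply, hFσ (mapsTo_radialChart_sphere hr.le hz), Function.comp_apply]
  exact congrArg γ (radialChartInv_radialChart hr.ne' z)

end LipschitzFilling

end

open LipschitzFilling in
theorem lipschitz_filling_of_small_scale_general {X : Type*} [MetricSpace X]
    (D C : ℝ) (hD : 0 < D) (hC : 1 ≤ C)
    (hsmall : ∀ (L : ℝ) (γ : ℂ → X), 0 < L → L < D →
      (∀ x ∈ sphere (0:ℂ) 1, ∀ y ∈ sphere (0:ℂ) 1, dist (γ x) (γ y) ≤ L * dist x y) →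
      ∃ f : ℂ → X, (∀ x ∈ sphere (0:ℂ) 1, f x = γ x) ∧
        ∀ x ∈ closedBall (0:ℂ) 1, ∀ y ∈ closedBall (0:ℂ) 1,
          dist (f x) (f y) ≤ C * L * dist x y)
    (hgeo : ∀ x y : X, dist x y < D → ∃ p : ℝ → X, p 0 = x ∧ p 1 = y ∧
      ∀ s ∈ Set.Icc (0:ℝ) 1, ∀ t ∈ Set.Icc (0:ℝ) 1,
        dist (p s) (p t) = |s - t| * dist x y)
    (γ : ℂ → X) (L : ℝ)
    (hγlip : ∀ x ∈ sphere (0:ℂ) 1, ∀ y ∈ sphere (0:ℂ) 1,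
      dist (γ x) (γ y) ≤ L * dist x y)
    (hnull : ∃ g : ℂ → X, ContinuousOn g (closedBall (0:ℂ) 1) ∧
      ∀ x ∈ sphere (0:ℂ) 1, g x = γ x) :
    ∃ (K : ℝ) (f : ℂ → X), (∀ x ∈ sphere (0:ℂ) 1, f x = γ x) ∧
      ∀ x ∈ closedBall (0:ℂ) 1, ∀ y ∈ closedBall (0:ℂ) 1,
        dist (f x) (f y) ≤ K * dist x y := by
  obtain ⟨g, hg, hgγ⟩ := hnull
  have hfill := FillsSmallLoops.fillsSmallSquares Complex.equivRealProdCLM hsmall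
    (zero_le_one.trans hC)
  obtain ⟨K, f, hfγ, hf⟩ := exists_lipschitzOnWith_disk_filling Complex.equivRealProdCLM hfill
    (div_pos hD (radialLipschitzConst_pos _)) hD hgeo (LipschitzOnWith.of_dist_le' hγlip) hg hgγ
  exact ⟨K, f, hfγ, fun x hx y hy => hf.dist_le_mul x hx y hy⟩

/-- If a complete metric space `X` is Lipschitz 1-connected at small scales (loops of
Lipschitz constant `< D` bound `C·L`-Lipschitz disks) and points at distance `< D` are
joined by (constant-speed) geodesics, then every continuous null-homotopic Lipschitz
loop `γ : S¹ → X` admits a Lipschitz filling `f : D² → X`; in particular its filling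
span is finite. -/
theorem lipschitz_filling_of_small_scale {X : Type*} [MetricSpace X] [CompleteSpace X]
    (D C : ℝ) (hD : 0 < D) (hC : 1 ≤ C)
    (hsmall : ∀ (L : ℝ) (γ : ℂ → X), 0 < L → L < D →
      (∀ x ∈ sphere (0:ℂ) 1, ∀ y ∈ sphere (0:ℂ) 1, dist (γ x) (γ y) ≤ L * dist x y) →
      ∃ f : ℂ → X, (∀ x ∈ sphere (0:ℂ) 1, f x = γ x) ∧
        ∀ x ∈ closedBall (0:ℂ) 1, ∀ y ∈ closedBall (0:ℂ) 1,
          dist (f x) (f y) ≤ C * L * dist x y)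
    (hgeo : ∀ x y : X, dist x y < D → ∃ p : ℝ → X, p 0 = x ∧ p 1 = y ∧
      ∀ s ∈ Set.Icc (0:ℝ) 1, ∀ t ∈ Set.Icc (0:ℝ) 1,
        dist (p s) (p t) = |s - t| * dist x y)
    (γ : ℂ → X) (L : ℝ)
    (hγlip : ∀ x ∈ sphere (0:ℂ) 1, ∀ y ∈ sphere (0:ℂ) 1,
      dist (γ x) (γ y) ≤ L * dist x y)
    (hnull : ∃ g : ℂ → X, ContinuousOn g (closedBall (0:ℂ) 1) ∧
      ∀ x ∈ sphere (0:ℂ) 1, g x = γ x) :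
    ∃ (K : ℝ) (f : ℂ → X), (∀ x ∈ sphere (0:ℂ) 1, f x = γ x) ∧
      ∀ x ∈ closedBall (0:ℂ) 1, ∀ y ∈ closedBall (0:ℂ) 1,
        dist (f x) (f y) ≤ K * dist x y :=
  lipschitz_filling_of_small_scale_general D C hD hC hsmall hgeo γ L hγlip hnull
end
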